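/- arXiv:1608.04987 — 4 statements merged into one kernel-verified Lean document; each statement's English description precedes it below -/
import Mathlib

section
/- If B > 0, N₀ ∈ ℝ, ω > 0, and 0 < x₀ < K, then the solution x(t) = K·x₀·F(t)/(K - x₀ + x₀·F(t)), with F(t) = exp(Bt + (N₀/ω)(1 - cos(ωt))), converges to K as t → ∞. -/
/-!
The factor `F` grows at least like `exp (B t - 2 |N₀ / ω|)`, because the periodic part of the
exponent is bounded below, so `F → ∞`. Dividing numerator and denominator by `F` turns the
solution into `K x₀ / ((K - x₀) / F + x₀)`, which tends to `K x₀ / x₀ = K`.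
-/

open Real Filter Topology

lemma neg_two_mul_abs_le_mul_one_sub_cos (c θ : ℝ) : -(2 * |c|) ≤ c * (1 - cos θ) := by
  cases abs_cases c <;> nlinarith [neg_one_le_cos θ, cos_le_one θ]

lemma tendsto_exp_mul_add_mul_one_sub_cos_atTop {B : ℝ} (hB : 0 < B) (c ω : ℝ) :
    Tendsto (fun t => exp (B * t + c * (1 - cos (ω * t)))) atTop atTop := by
  have hexponent : Tendsto (fun t => B * t + c * (1 - cos (ω * t))) atTop atTop :=
    tendsto_atTop_add_right_of_le atTop (-(2 * |c|)) (tendsto_id.const_mul_atTop hB)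
      fun t => neg_two_mul_abs_le_mul_one_sub_cos c (ω * t)
  exact tendsto_exp_atTop.comp hexponent

lemma tendsto_logistic_of_tendsto_atTop {α : Type*} {l : Filter α} {K x₀ : ℝ} (hx₀ : x₀ ≠ 0)
    {F : α → ℝ} (hF : Tendsto F l atTop) :
    Tendsto (fun t => K * x₀ * F t / (K - x₀ + x₀ * F t)) l (𝓝 K) := by
  have hden : Tendsto (fun t => (K - x₀) / F t + x₀) l (𝓝 x₀) := by
    simpa only [zero_add] using
      (tendsto_const_nhds.div_atTop hF).add (tendsto_const_nhds (x := x₀))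
  have hlim : Tendsto (fun t => K * x₀ / ((K - x₀) / F t + x₀)) l (𝓝 K) := by
    have h := (tendsto_const_nhds (x := K * x₀)).div hden hx₀
    rw [mul_div_cancel_right₀ K hx₀] at h
    exact h
  refine hlim.congr' ?_
  filter_upwards [hF.eventually_gt_atTop 0] with t hFt
  rw [div_add' _ _ _ hFt.ne', div_div_eq_mul_div]

theorem logistic_periodic_solution_tendsto_carrying_capacity_general
    (K ω B N₀ x₀ : ℝ) (hB : 0 < B)
    (hx₀ : 0 < x₀)
    (F : ℝ → ℝ)
    (hF : ∀ t, F t = Real.exp (B * t + (N₀ / ω) * (1 - Real.cos (ω * t))))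
    (x : ℝ → ℝ) (hx : ∀ t, x t = K * x₀ * F t / (K - x₀ + x₀ * F t)) :
    Tendsto x atTop (nhds K) := by
  have hFtop : Tendsto F atTop atTop := by
    rw [funext hF]
    exact tendsto_exp_mul_add_mul_one_sub_cos_atTop hB (N₀ / ω) ω
  rw [funext hx]
  exact tendsto_logistic_of_tendsto_atTop hx₀.ne' hFtop

/-- For `B > 0` the solution converges to the carrying capacity `K` as `t → ∞`. -/
theorem logistic_periodic_solution_tendsto_carrying_capacity
    (K ω B N₀ x₀ : ℝ) (hK : 0 < K) (hω : 0 < ω) (hB : 0 < B)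
    (hx₀ : 0 < x₀) (hx₀K : x₀ < K)
    (F : ℝ → ℝ)
    (hF : ∀ t, F t = Real.exp (B * t + (N₀ / ω) * (1 - Real.cos (ω * t))))
    (x : ℝ → ℝ) (hx : ∀ t, x t = K * x₀ * F t / (K - x₀ + x₀ * F t)) :
    Tendsto x atTop (nhds K) :=
  logistic_periodic_solution_tendsto_carrying_capacity_general K ω B N₀ x₀ hB hx₀ F hF x hx
end

section
/- For the logistic equation with constant negative feedback and purely oscillatory growth rate, dx/dt = N₀·sin(ωt)·x - C·x²/K with N₀ ≠ 0, C > 0, K > 0, ω > 0, any solution with x(0) = x₀ > 0 remains positive and bounded for all t ≥ 0: there exists M > 0 with 0 < x(t) ≤ M for all t ≥ 0. -/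
/-!
Writing the equation as `x' = b(t) x` with the continuous coefficient
`b(t) = N₀ sin(ωt) - C x(t)/K` gives `x(t) = x₀ exp (∫₀ᵗ b) > 0`. For the bound, drop the
nonpositive term `-C x²/K`: then `x(t) exp(-P(t))` is antitone for the primitive
`P(t) = N₀ (1 - cos ωt)/ω` of the growth rate, so `x(t) ≤ x₀ exp(P(t)) ≤ x₀ exp(2|N₀|/ω)`.
-/

open Real Set

section LinearDifferentialInequality

variable {x x' a P : ℝ → ℝ} {t₀ t : ℝ}

theorem le_mul_exp_sub_of_hasDerivAt_le (hP : ∀ s, t₀ ≤ s → HasDerivAt P (a s) s)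
    (hx : ∀ s, t₀ ≤ s → HasDerivAt x (x' s) s) (hle : ∀ s, t₀ ≤ s → x' s ≤ a s * x s)
    (ht : t₀ ≤ t) : x t ≤ x t₀ * exp (P t - P t₀) := by
  set g : ℝ → ℝ := fun s => x s * exp (-P s)
  have hg : ∀ s, t₀ ≤ s → HasDerivAt g ((x' s - a s * x s) * exp (-P s)) s := fun s hs =>
    ((hx s hs).mul (hP s hs).neg.exp).congr_deriv (by simp only [Pi.neg_apply]; ring)
  have hanti : AntitoneOn g (Ici t₀) := by
    refine antitoneOn_of_hasDerivWithinAt_nonpos (convex_Ici t₀)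
      (fun s hs => (hg s hs).continuousAt.continuousWithinAt)
      (fun s hs => (hg s (interior_subset hs)).hasDerivWithinAt) (fun s hs => ?_)
    exact mul_nonpos_of_nonpos_of_nonneg (sub_nonpos.2 (hle s (interior_subset hs))) (exp_pos _).le
  have hgt : g t ≤ g t₀ := hanti self_mem_Ici ht ht
  calc x t = g t * exp (P t) := by simp [g, mul_assoc, ← exp_add]
    _ ≤ g t₀ * exp (P t) := by gcongr
    _ = x t₀ * exp (P t - P t₀) := by simp only [g, mul_assoc, ← exp_add]; ring_nf

theorem eq_mul_exp_sub_of_hasDerivAt (hP : ∀ s, t₀ ≤ s → HasDerivAt P (a s) s)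
    (hx : ∀ s, t₀ ≤ s → HasDerivAt x (a s * x s) s) (ht : t₀ ≤ t) :
    x t = x t₀ * exp (P t - P t₀) := by
  have hneg : -x t ≤ -x t₀ * exp (P t - P t₀) :=
    le_mul_exp_sub_of_hasDerivAt_le (x := fun s => -x s) hP (fun s hs => (hx s hs).neg)
      (fun s _ => (neg_mul_eq_mul_neg _ _).le) ht
  exact le_antisymm (le_mul_exp_sub_of_hasDerivAt_le hP hx (fun _ _ => le_rfl) ht)
    (by linarith)

theorem pos_of_hasDerivAt_mul_self {b : ℝ → ℝ} (hb : Continuous b)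
    (hx : ∀ s, t₀ ≤ s → HasDerivAt x (b s * x s) s) (h₀ : 0 < x t₀) (ht : t₀ ≤ t) :
    0 < x t := by
  rw [eq_mul_exp_sub_of_hasDerivAt (P := fun s => ∫ r in t₀..s, b r)
    (fun s _ => (hb.integral_hasStrictDerivAt t₀ s).hasDerivAt) hx ht]
  positivity

end LinearDifferentialInequality

theorem hasDerivAt_mul_one_sub_cos_div (N₀ ω t : ℝ) (hω : ω ≠ 0) :
    HasDerivAt (fun s => N₀ * (1 - cos (ω * s)) / ω) (N₀ * sin (ω * t)) t := by
  have hcos := ((hasDerivAt_id' t).const_mul ω).cos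
  refine (((hcos.const_sub 1).const_mul N₀).div_const ω).congr_deriv ?_
  field_simp

theorem mul_one_sub_cos_div_le (N₀ ω θ : ℝ) (hω : 0 < ω) :
    N₀ * (1 - cos θ) / ω ≤ 2 * |N₀| / ω := by
  apply div_le_div_of_nonneg_right _ hω.le
  calc N₀ * (1 - cos θ) ≤ |N₀| * (1 - cos θ) :=
        mul_le_mul_of_nonneg_right (le_abs_self N₀) (sub_nonneg.2 (cos_le_one θ))
    _ ≤ |N₀| * 2 := by gcongr; linarith [neg_one_le_cos θ]
    _ = 2 * |N₀| := mul_comm _ _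

theorem case1_positive_bounded_general
    (K ω C N₀ x₀ : ℝ) (hK : 0 < K) (hω : 0 < ω) (hC : 0 < C)
    (hx₀ : 0 < x₀)
    (x : ℝ → ℝ) (hx0 : x 0 = x₀)
    (hx : ∀ t, 0 ≤ t →
      HasDerivAt x (N₀ * Real.sin (ω * t) * x t - C * (x t) ^ 2 / K) t) :
    ∃ M > 0, ∀ t, 0 ≤ t → 0 < x t ∧ x t ≤ M := by
  have hxc : ContinuousOn x (Ici 0) := fun t ht => (hx t ht).continuousAt.continuousWithinAt
  -- `max t 0` extends the coefficient continuously to `t < 0`, as the integral needs.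
  set b : ℝ → ℝ := fun t => N₀ * sin (ω * t) - C * x (max t 0) / K
  have hb : Continuous b := by
    have : Continuous fun t => x (max t 0) :=
      hxc.comp_continuous (continuous_id.max continuous_const) (fun t => le_max_right t 0)
    exact (by fun_prop : Continuous fun t => N₀ * sin (ω * t)).sub
      ((continuous_const.mul this).div_const K)
  have hpos : ∀ t, 0 ≤ t → 0 < x t := fun t ht =>
    pos_of_hasDerivAt_mul_self hb
      (fun s hs => by convert hx s hs using 1; simp only [b, max_eq_left hs]; ring)
      (hx0 ▸ hx₀) ht
  have hle : ∀ t, 0 ≤ t → x t ≤ x₀ * exp (2 * |N₀| / ω) := fun t ht =>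
    calc x t ≤ x 0 * exp (N₀ * (1 - cos (ω * t)) / ω - N₀ * (1 - cos (ω * 0)) / ω) :=
          le_mul_exp_sub_of_hasDerivAt_le (fun s _ => hasDerivAt_mul_one_sub_cos_div N₀ ω s hω.ne')
            hx (fun s _ => sub_le_self _ (by positivity)) ht
      _ ≤ x₀ * exp (2 * |N₀| / ω) := by
          simp only [hx0, mul_zero, cos_zero, sub_self, zero_div, sub_zero]
          gcongr x₀ * exp ?_
          exact mul_one_sub_cos_div_le N₀ ω _ hω
  exact ⟨x₀ * exp (2 * |N₀| / ω), by positivity, fun t ht => ⟨hpos t ht, hle t ht⟩⟩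

/-- Case-1 with `B = 0`: any solution of `dx/dt = N₀ sin(ωt) x - C x²/K` starting at
`x₀ > 0` stays positive and bounded for all `t ≥ 0`. -/
theorem case1_positive_bounded
    (K ω C N₀ x₀ : ℝ) (hK : 0 < K) (hω : 0 < ω) (hC : 0 < C) (hN₀ : N₀ ≠ 0)
    (hx₀ : 0 < x₀)
    (x : ℝ → ℝ) (hx0 : x 0 = x₀)
    (hx : ∀ t, 0 ≤ t →
      HasDerivAt x (N₀ * Real.sin (ω * t) * x t - C * (x t) ^ 2 / K) t) :
    ∃ M > 0, ∀ t, 0 ≤ t → 0 < x t ∧ x t ≤ M :=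
  case1_positive_bounded_general K ω C N₀ x₀ hK hω hC hx₀ x hx0 hx
end

section
/- For Case-2 with C > 0, B > 0, and |N₀| < B, the solution with x₀ > 0 given by formula (13) remains positive and bounded for all t ≥ 0; specifically x(t) ≤ max(x₀, K·C/(B - |N₀|)) for all t ≥ 0. -/
/-!
Write the equation as `x' = a(t) x` with `a(t) = C - (B + N₀ sin ωt) x(t) / K` continuous.
A solution of this linear equation that vanished at some time would vanish identically by
uniqueness, so `x` stays positive. For the bound, the damping coefficient is at least
`B - |N₀| > 0`, so `x' < 0` whenever `x > KC / (B - |N₀|)`: the solution can never cross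
a level above `max(x₀, KC / (B - |N₀|))`.
-/

open Real Set

theorem eqOn_zero_of_hasDerivWithinAt_mul_of_eq_zero {f a : ℝ → ℝ} {p q : ℝ}
    (ha : ContinuousOn a (Icc p q)) (hf : ContinuousOn f (Icc p q))
    (hf' : ∀ t ∈ Ioc p q, HasDerivWithinAt f (a t * f t) (Iic t) t) (hq : f q = 0) :
    EqOn f 0 (Icc p q) := by
  obtain ⟨M, hM⟩ := isCompact_Icc.exists_bound_of_continuousOn ha
  have hlip : ∀ t ∈ Ioc p q, LipschitzOnWith (Real.toNNReal M) (fun y => a t * y) univ :=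
    fun t ht => ((lipschitzWith_smul (a t)).weaken (by
      rw [← NNReal.coe_le_coe, coe_nnnorm, Real.coe_toNNReal']
      exact (hM t (Ioc_subset_Icc_self ht)).trans (le_max_left _ _))).lipschitzOnWith
  exact ODE_solution_unique_of_mem_Icc_left hlip hf hf' (fun _ _ => trivial) continuousOn_const
    (fun t _ => by rw [Pi.zero_apply, mul_zero]; exact hasDerivWithinAt_const t _ 0) (fun _ _ => trivial) hq

theorem pos_of_hasDerivAt_eq_mul {f a : ℝ → ℝ} {p : ℝ} (ha : ContinuousOn a (Ici p))
    (hf : ∀ t, p ≤ t → HasDerivAt f (a t * f t) t) (hp : 0 < f p) :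
    ∀ t, p ≤ t → 0 < f t := by
  intro t ht
  by_contra! hft
  have hfc : ContinuousOn f (Icc p t) := fun s hs =>
    (hf s hs.1).continuousAt.continuousWithinAt
  obtain ⟨t₀, ht₀, hft₀⟩ := intermediate_value_Icc' ht hfc ⟨hft, hp.le⟩
  have hvanish := eqOn_zero_of_hasDerivWithinAt_mul_of_eq_zero
    (ha.mono fun s hs => hs.1) (hfc.mono (Icc_subset_Icc_right ht₀.2))
    (fun s hs => (hf s hs.1.le).hasDerivWithinAt) hft₀
  exact hp.ne' (hvanish (left_mem_Icc.2 ht₀.1))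

theorem image_le_of_deriv_neg_of_lt {f f' : ℝ → ℝ} {p M : ℝ}
    (hf : ∀ t, p ≤ t → HasDerivAt f (f' t) t) (hp : f p ≤ M)
    (hneg : ∀ t, p ≤ t → M < f t → f' t < 0) : ∀ t, p ≤ t → f t ≤ M := by
  intro t ht
  -- The fencing theorem needs a strict inequality on the barrier, hence the barrier `M + ε`.
  refine le_of_forall_pos_le_add fun ε hε => ?_
  refine image_le_of_deriv_right_lt_deriv_boundary (f := f) (B := fun _ => M + ε) (B' := 0)
    (fun s hs => (hf s hs.1).continuousAt.continuousWithinAt)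
    (fun s hs => (hf s hs.1).hasDerivWithinAt) (by linarith) (fun _ => hasDerivAt_const _ _)
    (fun s hs hfs => hneg s hs.1 (by linarith)) ⟨ht, le_rfl⟩

theorem neg_abs_le_mul_sin (N θ : ℝ) : -|N| ≤ N * sin θ := by
  have h : |N * sin θ| ≤ |N| := by
    rw [abs_mul]
    exact mul_le_of_le_one_right (abs_nonneg N) (abs_sin_le_one θ)
  exact (abs_le.1 h).1

theorem mul_sub_mul_sq_div_neg {K C β b y : ℝ} (hK : 0 < K) (hβ : 0 < β) (hb : β ≤ b)
    (hy : 0 < y) (hCy : K * C / β < y) : C * y - b * y ^ 2 / K < 0 := by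
  have hKC : K * C < b * y := by
    calc K * C < β * y := by rwa [div_lt_iff₀' hβ] at hCy
      _ ≤ b * y := mul_le_mul_of_nonneg_right hb hy.le
  rw [sub_neg, lt_div_iff₀ hK]
  nlinarith

theorem case2_positive_bounded_general
    (K ω B C N₀ x₀ : ℝ) (hK : 0 < K)
    (hN₀ : |N₀| < B) (hx₀ : 0 < x₀)
    (x : ℝ → ℝ) (hx0 : x 0 = x₀)
    (hx : ∀ t, 0 ≤ t →
      HasDerivAt x (C * x t - (B + N₀ * Real.sin (ω * t)) * (x t) ^ 2 / K) t) :
    ∀ t, 0 ≤ t → 0 < x t ∧ x t ≤ max x₀ (K * C / (B - |N₀|)) := by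
  have hxc : ContinuousOn x (Ici 0) := fun t ht => (hx t ht).continuousAt.continuousWithinAt
  have hpos : ∀ t, 0 ≤ t → 0 < x t := by
    refine pos_of_hasDerivAt_eq_mul (a := fun t => C - (B + N₀ * sin (ω * t)) * x t / K)
      (by fun_prop) (fun t ht => ?_) (hx0 ▸ hx₀)
    convert hx t ht using 1
    ring
  refine fun t ht => ⟨hpos t ht, image_le_of_deriv_neg_of_lt hx (hx0 ▸ le_max_left _ _)
    (fun s hs hlt => ?_) t ht⟩
  have hx₀_lt : x₀ < x s := (le_max_left _ _).trans_lt hlt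
  exact mul_sub_mul_sq_div_neg hK (sub_pos.2 hN₀) (by linarith [neg_abs_le_mul_sin N₀ (ω * s)])
    (hx₀.trans hx₀_lt) ((le_max_right _ _).trans_lt hlt)

/-- Case-2 with `|N₀| < B`: the solution stays positive and bounded by
`max(x₀, KC/(B - |N₀|))` for all `t ≥ 0`. -/
theorem case2_positive_bounded
    (K ω B C N₀ x₀ : ℝ) (hK : 0 < K) (hω : 0 < ω) (hB : 0 < B) (hC : 0 < C)
    (hN₀ : |N₀| < B) (hx₀ : 0 < x₀)
    (x : ℝ → ℝ) (hx0 : x 0 = x₀)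
    (hx : ∀ t, 0 ≤ t →
      HasDerivAt x (C * x t - (B + N₀ * Real.sin (ω * t)) * (x t) ^ 2 / K) t) :
    ∀ t, 0 ≤ t → 0 < x t ∧ x t ≤ max x₀ (K * C / (B - |N₀|)) :=
  case2_positive_bounded_general K ω B C N₀ x₀ hK hN₀ hx₀ x hx0 hx
end

section
/- With B = 0, the quantity (distance between the two PDF peaks) D(ω) = M(ω) - x₀, where M(ω) = K·x₀·e^{2N₀/ω}/(K - x₀ + x₀·e^{2N₀/ω}), is strictly decreasing in ω on (0, ∞) and satisfies D(ω) → K - x₀ as ω → 0⁺ and D(ω) → 0 as ω → ∞. -/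
open Real Filter

/-! With `s = 2N₀/ω` the peak `M(ω)` is the logistic curve `L(s) = K x₀ eˢ / (K - x₀ + x₀ eˢ)`
through `L(0) = x₀`, which increases strictly to the carrying capacity `K`. Since `s` decreases
strictly in `ω`, with `s → ∞` as `ω → 0⁺` and `s → 0` as `ω → ∞`, the distance `L(s) - x₀`
decreases from `K - x₀` to `0`. -/

noncomputable def logisticCurve (K x₀ s : ℝ) : ℝ :=
  K * x₀ * exp s / (K - x₀ + x₀ * exp s)

section logisticCurve

variable {K x₀ : ℝ}

theorem logisticCurve_zero (hK : K ≠ 0) : logisticCurve K x₀ 0 = x₀ := by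
  simp only [logisticCurve, exp_zero, mul_one, sub_add_cancel, mul_div_cancel_left₀ x₀ hK]

theorem logisticCurve_eq_div (hx₀ : 0 < x₀) (hx₀K : x₀ < K) (s : ℝ) :
    logisticCurve K x₀ s = K * x₀ / ((K - x₀) * exp (-s) + x₀) := by
  have hden : 0 < K - x₀ + x₀ * exp s := by nlinarith [exp_pos s]
  rw [logisticCurve, exp_neg]
  field_simp

theorem strictMono_logisticCurve (hx₀ : 0 < x₀) (hx₀K : x₀ < K) :
    StrictMono (logisticCurve K x₀) := by
  intro s t hst
  rw [logisticCurve_eq_div hx₀ hx₀K, logisticCurve_eq_div hx₀ hx₀K]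
  have hexp : exp (-t) < exp (-s) := exp_lt_exp.mpr (neg_lt_neg hst)
  apply div_lt_div_of_pos_left (by nlinarith) (by nlinarith [exp_pos (-t)])
  nlinarith

theorem continuous_logisticCurve (hx₀ : 0 < x₀) (hx₀K : x₀ < K) :
    Continuous (logisticCurve K x₀) := by
  simp_rw [funext (logisticCurve_eq_div hx₀ hx₀K)]
  exact continuous_const.div (by fun_prop) fun s => by nlinarith [exp_pos (-s)]

theorem tendsto_logisticCurve_atTop (hx₀ : 0 < x₀) (hx₀K : x₀ < K) :
    Tendsto (logisticCurve K x₀) atTop (nhds K) := by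
  simp_rw [funext (logisticCurve_eq_div hx₀ hx₀K)]
  have hden : Tendsto (fun s => (K - x₀) * exp (-s) + x₀) atTop (nhds x₀) := by
    simpa using (tendsto_exp_neg_atTop_nhds_zero.const_mul (K - x₀)).add_const x₀
  have h : Tendsto (fun s => K * x₀ / ((K - x₀) * exp (-s) + x₀)) atTop (nhds (K * x₀ / x₀)) :=
    tendsto_const_nhds.div hden hx₀.ne'
  rwa [mul_div_cancel_right₀ K hx₀.ne'] at h

end logisticCurve

theorem strictAntiOn_const_div {c : ℝ} (hc : 0 < c) :
    StrictAntiOn (fun ω : ℝ => c / ω) (Set.Ioi 0) :=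
  fun _ ha _ _ hab => div_lt_div_of_pos_left hc ha hab

theorem tendsto_const_div_nhdsGT_zero {c : ℝ} (hc : 0 < c) :
    Tendsto (fun ω : ℝ => c / ω) (nhdsWithin 0 (Set.Ioi 0)) atTop := by
  simpa only [div_eq_mul_inv] using tendsto_inv_nhdsGT_zero.const_mul_atTop hc

theorem peak_distance_monotone_limits_general
    (K N₀ x₀ : ℝ) (hN₀ : 0 < N₀) (hx₀ : 0 < x₀) (hx₀K : x₀ < K)
    (M D : ℝ → ℝ)
    (hM : ∀ ω, M ω = K * x₀ * Real.exp (2 * N₀ / ω) /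
        (K - x₀ + x₀ * Real.exp (2 * N₀ / ω)))
    (hD : ∀ ω, D ω = M ω - x₀) :
    StrictAntiOn D (Set.Ioi 0) ∧
      Tendsto D (nhdsWithin 0 (Set.Ioi 0)) (nhds (K - x₀)) ∧
      Tendsto D atTop (nhds 0) := by
  have hD_eq : D = fun ω => logisticCurve K x₀ (2 * N₀ / ω) - x₀ :=
    funext fun ω => by rw [hD, hM, logisticCurve]
  have h2N₀ : 0 < 2 * N₀ := by positivity
  subst hD_eq
  refine ⟨?_, ?_, ?_⟩
  · intro a ha b hb hab
    have hM_anti := (strictMono_logisticCurve hx₀ hx₀K).comp_strictAntiOn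
      (strictAntiOn_const_div h2N₀)
    exact sub_lt_sub_right (hM_anti ha hb hab) x₀
  · exact ((tendsto_logisticCurve_atTop hx₀ hx₀K).comp
      (tendsto_const_div_nhdsGT_zero h2N₀)).sub_const x₀
  · have h := (((continuous_logisticCurve hx₀ hx₀K).tendsto 0).comp
      (tendsto_id.const_div_atTop (2 * N₀))).sub_const x₀
    rwa [Function.comp_def, logisticCurve_zero (by linarith), sub_self] at h

/-- The distance `D(ω) = M(ω) - x₀` between the two PDF peaks is strictly decreasing on
`(0, ∞)`, tends to `K - x₀` as `ω → 0⁺`, and tends to `0` as `ω → ∞`. -/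
theorem peak_distance_monotone_limits
    (K N₀ x₀ : ℝ) (hK : 0 < K) (hN₀ : 0 < N₀) (hx₀ : 0 < x₀) (hx₀K : x₀ < K)
    (M D : ℝ → ℝ)
    (hM : ∀ ω, M ω = K * x₀ * Real.exp (2 * N₀ / ω) /
        (K - x₀ + x₀ * Real.exp (2 * N₀ / ω)))
    (hD : ∀ ω, D ω = M ω - x₀) :
    StrictAntiOn D (Set.Ioi 0) ∧
      Tendsto D (nhdsWithin 0 (Set.Ioi 0)) (nhds (K - x₀)) ∧
      Tendsto D atTop (nhds 0) :=
  peak_distance_monotone_limits_general K N₀ x₀ hN₀ hx₀ hx₀K M D hM hD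
end
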